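/- Let K ⊆ V be a nonempty cone and 𝒻 ⊆ F̂(K) a family such that −∞ < ζ_p(co(⋃_{F ∈ 𝒻} F)) < +∞. Then ζ_p(K ∩ co(⋃_{F ∈ 𝒻} F)) = inf{ζ_p(K ∩ F) : F ∈ 𝒻} = inf{ζ_p(F) : F ∈ 𝒻}; that is, the nonconvex problem over K ∩ co(⋃𝒻) decomposes into the family of subproblems COP(K ∩ F), F ∈ 𝒻, each equivalent to its convex reformulation COP(F). -/

import Mathlib

/-! If `ζ_p(co C)` were below `ζ_p(C)` for a cone `C`, a feasible `X ∈ co C` and a level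
`⟨Q, X⟩ < μ < ζ_p(C)` would give, since `co C` is not contained in the half-space
`⟨Q - μ H, ·⟩ ≥ 0`, some `Y ∈ C` with `⟨H, Y⟩ ≤ 0` and `⟨Q - μ H, Y⟩ < 0`. Then
`Y - ⟨H, Y⟩ X` is a direction of `co C` along which `⟨H, ·⟩` is constant and `⟨Q, ·⟩` decreases,
forcing `ζ_p(co C) = -∞`. Applied to `⋃ 𝓕` and to each `K ∩ F`, whose convex hull is `F`, this gives
both equalities. -/

open RealInnerProductSpace
open scoped Pointwise

variable {V : Type*} [NormedAddCommGroup V] [InnerProductSpace ℝ V]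

/-- A (not necessarily convex or closed) cone: closed under nonnegative scaling. -/
def IsCone (C : Set V) : Prop := ∀ X ∈ C, ∀ l : ℝ, 0 ≤ l → l • X ∈ C

/-- The optimal value `ζ_p(C) = inf {⟨Q, X⟩ : X ∈ C, ⟨H, X⟩ = 1}` in `[-∞, +∞]`;
it equals `+∞` when the feasible set is empty. -/
noncomputable def zetaP (Q H : V) (C : Set V) : EReal :=
  sInf ((fun X => ((⟪Q, X⟫ : ℝ) : EReal)) '' {X | X ∈ C ∧ ⟪H, X⟫ = 1})

/-- `F̂(K)`: the family of all convex cones `J ⊆ co K` with `co (K ∩ J) = J`. -/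
def Fhat (K : Set V) : Set (Set V) :=
  {J | Convex ℝ J ∧ IsCone J ∧ J ⊆ convexHull ℝ K ∧ convexHull ℝ (K ∩ J) = J}

namespace IsCone

lemma inter {C D : Set V} (hC : IsCone C) (hD : IsCone D) : IsCone (C ∩ D) :=
  fun X hX l hl => ⟨hC X hX.1 l hl, hD X hX.2 l hl⟩

lemma add_mem {S : Set V} (hS : IsCone S) (hconv : Convex ℝ S) {X Y : V}
    (hX : X ∈ S) (hY : Y ∈ S) : X + Y ∈ S := by
  have hmid := hconv hX hY (by norm_num : (0 : ℝ) ≤ 2⁻¹) (by norm_num : (0 : ℝ) ≤ 2⁻¹)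
    (by norm_num)
  simpa [smul_add, smul_smul] using hS _ hmid 2 (by norm_num)

end IsCone

lemma isCone_convexHull {C : Set V} (hC : IsCone C) : IsCone (convexHull ℝ C) := by
  intro X hX l hl
  rcases hl.eq_or_lt with rfl | hl
  · obtain ⟨c, hc⟩ := convexHull_nonempty_iff.mp ⟨X, hX⟩
    simpa using subset_convexHull ℝ C (by simpa using hC c hc 0 le_rfl)
  · have hsub : l • C ⊆ C := by
      rintro _ ⟨Y, hY, rfl⟩
      exact hC Y hY l hl.le
    exact convexHull_mono hsub (by rw [convexHull_smul]; exact Set.smul_mem_smul_set hX)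

lemma isCone_sUnion {𝓕 : Set (Set V)} (h𝓕 : ∀ F ∈ 𝓕, IsCone F) : IsCone (⋃₀ 𝓕) := by
  rintro X ⟨F, hF, hXF⟩ l hl
  exact ⟨F, hF, h𝓕 F hF X hXF l hl⟩

lemma zetaP_anti (Q H : V) {C D : Set V} (h : C ⊆ D) : zetaP Q H D ≤ zetaP Q H C :=
  sInf_le_sInf (Set.image_mono fun _ hX => ⟨h hX.1, hX.2⟩)

lemma zetaP_le_inner (Q H : V) {C : Set V} {X : V} (hX : X ∈ C) (hHX : ⟪H, X⟫ = 1) :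
    zetaP Q H C ≤ (⟪Q, X⟫ : EReal) :=
  sInf_le ⟨X, ⟨hX, hHX⟩, rfl⟩

lemma zetaP_sUnion (Q H : V) (𝓕 : Set (Set V)) :
    zetaP Q H (⋃₀ 𝓕) = ⨅ F ∈ 𝓕, zetaP Q H F := by
  refine le_antisymm (le_iInf₂ fun F hF => zetaP_anti Q H (Set.subset_sUnion_of_mem hF)) ?_
  refine le_sInf ?_
  rintro _ ⟨X, ⟨⟨F, hF, hXF⟩, hHX⟩, rfl⟩
  exact iInf₂_le_of_le F hF (zetaP_le_inner Q H hXF hHX)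

lemma zetaP_eq_bot_of_ray (Q H : V) {S : Set V} {X D : V}
    (hray : ∀ t : ℝ, 0 ≤ t → X + t • D ∈ S) (hHX : ⟪H, X⟫ = 1) (hHD : ⟪H, D⟫ = 0)
    (hQD : ⟪Q, D⟫ < 0) : zetaP Q H S = ⊥ := by
  refine (EReal.eq_bot_iff_forall_lt _).mpr fun y => ?_
  set t := (|⟪Q, X⟫ - y| + 1) / -⟪Q, D⟫
  have ht : 0 ≤ t := div_nonneg (by positivity) (by linarith)
  have hHXt : ⟪H, X + t • D⟫ = 1 := by simp [inner_add_right, inner_smul_right, hHX, hHD]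
  have hQXt : ⟪Q, X + t • D⟫ < y := by
    have : t * ⟪Q, D⟫ = -(|⟪Q, X⟫ - y| + 1) := by simp only [t]; field_simp [hQD.ne]
    rw [inner_add_right, inner_smul_right, this]
    linarith [le_abs_self (⟪Q, X⟫ - y)]
  exact (zetaP_le_inner Q H (hray t ht) hHXt).trans_lt (EReal.coe_lt_coe_iff.mpr hQXt)

lemma IsCone.inner_sub_smul_nonneg_of_le_zetaP {Q H : V} {C : Set V} (hC : IsCone C) {μ : ℝ}
    (hμ : (μ : EReal) ≤ zetaP Q H C) {Y : V} (hY : Y ∈ C) (hHY : 0 < ⟪H, Y⟫) :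
    0 ≤ ⟪Q - μ • H, Y⟫ := by
  have hfeas : ⟪H, ⟪H, Y⟫⁻¹ • Y⟫ = 1 := by
    rw [inner_smul_right, inv_mul_cancel₀ hHY.ne']
  have hle : μ ≤ ⟪H, Y⟫⁻¹ * ⟪Q, Y⟫ := by
    have := hμ.trans (zetaP_le_inner Q H (hC Y hY _ (inv_nonneg.mpr hHY.le)) hfeas)
    rwa [inner_smul_right, EReal.coe_le_coe_iff] at this
  rw [inner_sub_left, inner_smul_left, RCLike.conj_to_real, sub_nonneg]
  rwa [le_inv_mul_iff₀ hHY, mul_comm] at hle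

theorem IsCone.zetaP_convexHull {Q H : V} {C : Set V} (hC : IsCone C)
    (hbot : ⊥ < zetaP Q H (convexHull ℝ C)) : zetaP Q H (convexHull ℝ C) = zetaP Q H C := by
  refine le_antisymm (zetaP_anti Q H (subset_convexHull ℝ C)) (le_sInf ?_)
  rintro _ ⟨X, ⟨hX, hHX⟩, rfl⟩
  by_contra! hlt
  obtain ⟨μ, hQX, hμ⟩ := EReal.lt_iff_exists_real_btwn.mp hlt
  set L := Q - μ • H
  have hLX : ⟪L, X⟫ < 0 := by
    simpa [L, inner_sub_left, inner_smul_left, hHX] using EReal.coe_lt_coe_iff.mp hQX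
  obtain ⟨Y, hY, hHY, hLY⟩ : ∃ Y ∈ C, ⟪H, Y⟫ ≤ 0 ∧ ⟪L, Y⟫ < 0 := by
    by_contra! hnone
    have hhalf : C ⊆ {Z | 0 ≤ ⟪L, Z⟫} := fun Z hZ =>
      (le_or_gt ⟪H, Z⟫ 0).elim (hnone Z hZ)
        (hC.inner_sub_smul_nonneg_of_le_zetaP hμ.le hZ)
    have := convexHull_min hhalf (convex_halfSpace_ge (innerₛₗ ℝ L).isLinear 0) hX
    exact hLX.not_ge this
  set D := Y + (-⟪H, Y⟫) • X
  have hS := isCone_convexHull hC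
  have hD : D ∈ convexHull ℝ C :=
    hS.add_mem (convex_convexHull ℝ C) (subset_convexHull ℝ C hY) (hS X hX _ (by linarith))
  have hHD : ⟪H, D⟫ = 0 := by simp [D, inner_add_right, inner_smul_right, hHX]
  have hQD : ⟪Q, D⟫ < 0 := by
    have hLD : ⟪L, D⟫ = ⟪Q, D⟫ := by simp [L, inner_sub_left, inner_smul_left, hHD]
    have : ⟪L, D⟫ = ⟪L, Y⟫ - ⟪H, Y⟫ * ⟪L, X⟫ := by
      simp only [D, inner_add_right, inner_smul_right]; ring
    linarith [mul_nonneg_of_nonpos_of_nonpos hHY hLX.le]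
  have hray : ∀ t : ℝ, 0 ≤ t → X + t • D ∈ convexHull ℝ C := fun t ht =>
    hS.add_mem (convex_convexHull ℝ C) hX (hS D hD t ht)
  exact hbot.ne' (zetaP_eq_bot_of_ray Q H hray hHX hHD hQD)

lemma zetaP_inter_of_mem_Fhat {Q H : V} {K F : Set V} (hK : IsCone K) (hF : F ∈ Fhat K)
    (hbot : ⊥ < zetaP Q H F) : zetaP Q H (K ∩ F) = zetaP Q H F := by
  obtain ⟨-, hFcone, -, hhull⟩ := hF
  have h := (hK.inter hFcone).zetaP_convexHull (hhull.symm ▸ hbot)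
  rw [hhull] at h
  exact h.symm

theorem stmt_14_general (Q H : V) (K : Set V)
    (hKcone : IsCone K)
    (𝓕 : Set (Set V)) (h𝓕 : 𝓕 ⊆ Fhat K)
    (hfin : ⊥ < zetaP Q H (convexHull ℝ (⋃₀ 𝓕)) ∧ zetaP Q H (convexHull ℝ (⋃₀ 𝓕)) < ⊤) :
    zetaP Q H (K ∩ convexHull ℝ (⋃₀ 𝓕)) = ⨅ F ∈ 𝓕, zetaP Q H (K ∩ F) ∧
    (⨅ F ∈ 𝓕, zetaP Q H (K ∩ F)) = ⨅ F ∈ 𝓕, zetaP Q H F := by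
  have hsub : ∀ F ∈ 𝓕, F ⊆ convexHull ℝ (⋃₀ 𝓕) := fun F hF =>
    (Set.subset_sUnion_of_mem hF).trans (subset_convexHull ℝ _)
  have hhull : zetaP Q H (convexHull ℝ (⋃₀ 𝓕)) = ⨅ F ∈ 𝓕, zetaP Q H F := by
    rw [(isCone_sUnion fun F hF => (h𝓕 hF).2.1).zetaP_convexHull hfin.1, zetaP_sUnion]
  have hpieces : (⨅ F ∈ 𝓕, zetaP Q H (K ∩ F)) = ⨅ F ∈ 𝓕, zetaP Q H F :=
    iInf_congr fun F => iInf_congr fun hF => zetaP_inter_of_mem_Fhat hKcone (h𝓕 hF)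
      (hfin.1.trans_le (zetaP_anti Q H (hsub F hF)))
  refine ⟨le_antisymm ?_ ?_, hpieces⟩
  · exact le_iInf₂ fun F hF => zetaP_anti Q H (Set.inter_subset_inter_right K (hsub F hF))
  · rw [hpieces, ← hhull]
    exact zetaP_anti Q H Set.inter_subset_right

/-- Theorem 3.3 (iii): for a family `𝓕 ⊆ F̂(K)` with `-∞ < ζ_p(co (⋃ 𝓕)) < ∞`,
`ζ_p(K ∩ co (⋃ 𝓕)) = inf {ζ_p(K ∩ F) : F ∈ 𝓕} = inf {ζ_p(F) : F ∈ 𝓕}`. -/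
theorem stmt_14 [FiniteDimensional ℝ V] (Q H : V) (hH : H ≠ 0) (K : Set V)
    (hKne : K.Nonempty) (hKcone : IsCone K)
    (𝓕 : Set (Set V)) (h𝓕 : 𝓕 ⊆ Fhat K)
    (hfin : ⊥ < zetaP Q H (convexHull ℝ (⋃₀ 𝓕)) ∧ zetaP Q H (convexHull ℝ (⋃₀ 𝓕)) < ⊤) :
    zetaP Q H (K ∩ convexHull ℝ (⋃₀ 𝓕)) = ⨅ F ∈ 𝓕, zetaP Q H (K ∩ F) ∧
    (⨅ F ∈ 𝓕, zetaP Q H (K ∩ F)) = ⨅ F ∈ 𝓕, zetaP Q H F :=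
  stmt_14_general Q H K hKcone 𝓕 h𝓕 hfin
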